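/- If X and Y are complete metric spaces and gph F is locally closed near (x̄,ȳ) (i.e. gph F ∩ U is closed for some closed neighbourhood U of (x̄,ȳ)), then the Hölder subregularity modulus of order q of F at (x̄,ȳ) equals the uniform strict q-slope: sr_q[F](x̄,ȳ) = \overline{|∇F|}^◇_q(x̄,ȳ). -/
import Mathlib


open Filter Metric Set Topology
open scoped Classical

noncomputable section

namespace HolderPaper

/-- Extended-real quotient `a / d` of an extended real by a nonnegative real,
with the convention that division by `0` yields `⊤`. -/
def equot (a : EReal) (d : ℝ) : EReal := if d = 0 then ⊤ else a * ((d⁻¹ : ℝ) : EReal)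

section MetricDefs

variable {X Y : Type*} [MetricSpace X] [MetricSpace Y]

/-- The asymmetric maximum-type distance `d_ρ((x,y),(u,v)) = max{d(x,u), ρ d(y,v)}`. -/
def drho (ρ : ℝ) (p q : X × Y) : ℝ := max (dist p.1 q.1) (ρ * dist p.2 q.2)

/-- Positive part `f₊`. -/
def fplus (f : X × Y → EReal) (p : X × Y) : EReal := max (f p) 0

/-- Condition (P1): `f(x,y) > 0` whenever `y ≠ ybar`. -/
def P1 (f : X × Y → EReal) (ybar : Y) : Prop := ∀ p : X × Y, p.2 ≠ ybar → 0 < f p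

/-- Condition (P2): `liminf_{f(x,y)↓0} f(x,y)/d(y,ybar) > 0`. -/
def P2 (f : X × Y → EReal) (ybar : Y) : Prop :=
  0 < liminf (fun p : X × Y => equot (f p) (dist p.2 ybar)) ((𝓝[>] (0 : EReal)).comap f)

/-- The lower 0-level set `S(f) = {x | f(x,ybar) ≤ 0}`. -/
def Sf (f : X × Y → EReal) (ybar : Y) : Set X := {x | f (x, ybar) ≤ 0}

/-- The error bound modulus `Er f(xbar,ybar)`:
`liminf` of `f(x,y)/d(x,S(f))` over pairs `(x,y)` with `f(x,y) > 0` as `x → xbar`. -/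
def erMod (f : X × Y → EReal) (xbar : X) (ybar : Y) : EReal :=
  liminf (fun p : X × Y => equot (f p) (infDist p.1 (Sf f ybar)))
    ((𝓝 xbar).comap Prod.fst ⊓ 𝓟 {p : X × Y | 0 < f p})

/-- `f` has an error bound w.r.t. `x` at `(xbar,ybar)` with constant `τ`. -/
def hasErrorBound (f : X × Y → EReal) (xbar : X) (ybar : Y) (τ : ℝ) : Prop :=
  ∃ U ∈ 𝓝 xbar, ∀ x ∈ U, ∀ y : Y, ((τ * infDist x (Sf f ybar) : ℝ) : EReal) ≤ fplus f (x, y)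

/-- The nonlocal ρ-slope `|∇f|◇_ρ(x,y)` (set to `⊤` if `f(x,y) = ⊤`). -/
def nslope (f : X × Y → EReal) (ρ : ℝ) (p : X × Y) : EReal :=
  if f p = ⊤ then ⊤
  else ⨆ (q : X × Y) (_ : q ≠ p), equot (max (f p - fplus f q) 0) (drho ρ p q)

/-- The (local) ρ-slope `|∇f|_ρ(x,y)`. -/
def lslope (f : X × Y → EReal) (ρ : ℝ) (p : X × Y) : EReal :=
  limsup (fun q : X × Y => equot (max (f p - f q) 0) (drho ρ q p)) (𝓝[≠] p)

/-- The uniform strict outer slope `\overline{|∇f|}^◇(xbar,ybar)`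
(`lim_{ρ↓0}` of a quantity nonincreasing in `ρ`, i.e. the supremum over `ρ > 0`). -/
def uss (f : X × Y → EReal) (xbar : X) (ybar : Y) : EReal :=
  ⨆ (ρ : ℝ) (_ : 0 < ρ),
    ⨅ (p : X × Y) (_ : dist p.1 xbar < ρ ∧ 0 < f p ∧ f p < (ρ : EReal)), nslope f ρ p

/-- The strict outer slope `\overline{|∇f|}^{>}(xbar,ybar)`. -/
def sos (f : X × Y → EReal) (xbar : X) (ybar : Y) : EReal :=
  ⨆ (ρ : ℝ) (_ : 0 < ρ),
    ⨅ (p : X × Y) (_ : dist p.1 xbar < ρ ∧ 0 < f p ∧ f p < (ρ : EReal)), lslope f ρ p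

/-- The modified strict outer slope `\overline{|∇f|}^{>+}(xbar,ybar)`. -/
def msos (f : X × Y → EReal) (xbar : X) (ybar : Y) : EReal :=
  ⨆ (ρ : ℝ) (_ : 0 < ρ),
    ⨅ (p : X × Y) (_ : dist p.1 xbar < ρ ∧ 0 < f p ∧ f p < (ρ : EReal)),
      max (lslope f ρ p) (equot (f p) (dist p.1 xbar))

/-- Graph of a set-valued mapping. -/
def gph (F : X → Set Y) : Set (X × Y) := {p | p.2 ∈ F p.1}

/-- Inverse image `F⁻¹(ybar)`. -/
def Finv (F : X → Set Y) (ybar : Y) : Set X := {x | ybar ∈ F x}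

/-- The function `f(x,y) = (d(y,ybar))^q` on `gph F`, `+∞` elsewhere. -/
def fFq (F : X → Set Y) (ybar : Y) (qq : ℝ) : X × Y → EReal :=
  fun p => if p ∈ gph F then ((dist p.2 ybar ^ qq : ℝ) : EReal) else ⊤

/-- The function `f(x,y) = ‖y - ybar‖` on `gph F`, `+∞` elsewhere (case `q = 1`). -/
def fF1 (F : X → Set Y) (ybar : Y) : X × Y → EReal :=
  fun p => if p ∈ gph F then ((dist p.2 ybar : ℝ) : EReal) else ⊤

/-- The ρ-slope `|∇F|_ρ(x,y)` of a set-valued mapping at `(x,y) ∈ gph F`. -/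
def FslopeR (F : X → Set Y) (ybar : Y) (ρ : ℝ) (p : X × Y) : EReal :=
  limsup (fun u : X × Y => equot ((max (dist p.2 ybar - dist u.2 ybar) 0 : ℝ) : EReal) (drho ρ u p))
    (𝓝[gph F \ {p}] p)

/-- The nonlocal (q,ρ)-slope `|∇F|◇_{q,ρ}(x,y)` of a set-valued mapping. -/
def FnslopeQ (F : X → Set Y) (ybar : Y) (qq ρ : ℝ) (p : X × Y) : EReal :=
  ⨆ (u : X × Y) (_ : u ∈ gph F ∧ u ≠ p),
    equot ((max (dist p.2 ybar ^ qq - dist u.2 ybar ^ qq) 0 : ℝ) : EReal) (drho ρ u p)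

/-- The uniform strict q-slope `\overline{|∇F|}^◇_q(xbar,ybar)`. -/
def ussFq (F : X → Set Y) (xbar : X) (ybar : Y) (qq : ℝ) : EReal :=
  ⨆ (ρ : ℝ) (_ : 0 < ρ),
    ⨅ (p : X × Y)
      (_ : p ∈ gph F ∧ dist p.1 xbar < ρ ∧ dist p.2 ybar < ρ ∧ p.1 ∉ Finv F ybar),
      FnslopeQ F ybar qq ρ p

/-- The strict q-slope `\overline{|∇F|}_q(xbar,ybar)`. -/
def sosFq (F : X → Set Y) (xbar : X) (ybar : Y) (qq : ℝ) : EReal :=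
  (qq : EReal) *
    ⨆ (ρ : ℝ) (_ : 0 < ρ),
      ⨅ (p : X × Y)
        (_ : p ∈ gph F ∧ dist p.1 xbar < ρ ∧ dist p.2 ybar < ρ ∧ p.1 ∉ Finv F ybar),
        ((dist p.2 ybar ^ (qq - 1) : ℝ) : EReal) * FslopeR F ybar ρ p

/-- The modified strict q-slope `\overline{|∇F|}^{+}_q(xbar,ybar)`. -/
def msosFq (F : X → Set Y) (xbar : X) (ybar : Y) (qq : ℝ) : EReal :=
  ⨆ (ρ : ℝ) (_ : 0 < ρ),
    ⨅ (p : X × Y)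
      (_ : p ∈ gph F ∧ dist p.1 xbar < ρ ∧ dist p.2 ybar < ρ ∧ p.1 ∉ Finv F ybar),
      max (((qq * dist p.2 ybar ^ (qq - 1) : ℝ) : EReal) * FslopeR F ybar ρ p)
        (equot ((dist p.2 ybar ^ qq : ℝ) : EReal) (dist p.1 xbar))

/-- The Hölder subregularity modulus of order `q`:
`liminf_{x→xbar, x∉F⁻¹(ybar)} (d(ybar,F(x)))^q / d(x,F⁻¹(ybar))`
(with `d(ybar,∅) = +∞`). -/
def srq (F : X → Set Y) (xbar : X) (ybar : Y) (qq : ℝ) : EReal :=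
  liminf
    (fun x : X =>
      equot (if F x = ∅ then ⊤ else ((infDist ybar (F x) ^ qq : ℝ) : EReal))
        (infDist x (Finv F ybar)))
    (𝓝[(Finv F ybar)ᶜ] xbar)

end MetricDefs

section NormedDefs

variable {X Y : Type*} [NormedAddCommGroup X] [NormedSpace ℝ X]
  [NormedAddCommGroup Y] [NormedSpace ℝ Y]

/-- The Fréchet subdifferential of `f : X × Y → ℝ∪{+∞}` at `p`, as a set of pairs of
continuous linear functionals (empty when `f p = ⊤`). -/
def fsubdiff (f : X × Y → EReal) (p : X × Y) : Set ((X →L[ℝ] ℝ) × (Y →L[ℝ] ℝ)) :=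
  {φ | f p ≠ ⊤ ∧ 0 ≤ liminf
      (fun q : X × Y =>
        equot (f q - f p - ((φ.1 (q.1 - p.1) + φ.2 (q.2 - p.2) : ℝ) : EReal)) (dist q p))
      (𝓝[≠] p)}

/-- The subdifferential ρ-slope `|∂f|_ρ(x,y)`. -/
def sdslope (f : X × Y → EReal) (ρ : ℝ) (p : X × Y) : EReal :=
  ⨅ (φ : (X →L[ℝ] ℝ) × (Y →L[ℝ] ℝ)) (_ : φ ∈ fsubdiff f p ∧ ‖φ.2‖ < ρ), (‖φ.1‖ : EReal)

/-- The strict outer subdifferential slope `\overline{|∂f|}^{>}(xbar,ybar)`. -/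
def ssds (f : X × Y → EReal) (xbar : X) (ybar : Y) : EReal :=
  ⨆ (ρ : ℝ) (_ : 0 < ρ),
    ⨅ (p : X × Y) (_ : dist p.1 xbar < ρ ∧ 0 < f p ∧ f p < (ρ : EReal)), sdslope f ρ p

/-- The modified strict outer subdifferential slope `\overline{|∂f|}^{>+}(xbar,ybar)`. -/
def mssds (f : X × Y → EReal) (xbar : X) (ybar : Y) : EReal :=
  ⨆ (ρ : ℝ) (_ : 0 < ρ),
    ⨅ (p : X × Y) (_ : dist p.1 xbar < ρ ∧ 0 < f p ∧ f p < (ρ : EReal)),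
      max (sdslope f ρ p) (equot (f p) (dist p.1 xbar))

/-- `f` is convex on the set `U` (with extended-real values). -/
def convexOnE (U : Set (X × Y)) (f : X × Y → EReal) : Prop :=
  Convex ℝ U ∧ ∀ p ∈ U, ∀ q ∈ U, ∀ t : ℝ, 0 ≤ t → t ≤ 1 →
    f (t • p + (1 - t) • q) ≤ (t : EReal) * f p + ((1 - t : ℝ) : EReal) * f q

/-- The Fréchet normal cone to `Ω ⊂ X × Y` at `p ∈ Ω`. -/
def ncone (Ω : Set (X × Y)) (p : X × Y) : Set ((X →L[ℝ] ℝ) × (Y →L[ℝ] ℝ)) :=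
  {φ | limsup
      (fun q : X × Y =>
        equot (((φ.1 (q.1 - p.1) + φ.2 (q.2 - p.2) : ℝ)) : EReal) (dist q p))
      (𝓝[Ω \ {p}] p) ≤ 0}

/-- The Fréchet coderivative `D*F(x,y)(y*)`. -/
def coderiv (F : X → Set Y) (p : X × Y) (ys : Y →L[ℝ] ℝ) : Set (X →L[ℝ] ℝ) :=
  {xs | (xs, -ys) ∈ ncone (gph F) p}

/-- The (normalized) duality mapping `J(y) = {y* : ‖y*‖ = 1, ⟨y*,y⟩ = ‖y‖}`. -/
def Jdual (y : Y) : Set (Y →L[ℝ] ℝ) := {ys | ‖ys‖ = 1 ∧ ys y = ‖y‖}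

/-- The subdifferential ρ-slope of `F` at `(x,y) ∈ gph F`:
`inf{‖x*‖ : x* ∈ D*F(x,y)(J(y-ybar) + ρ𝔹*)}`. -/
def FsdSlope (F : X → Set Y) (ybar : Y) (ρ : ℝ) (p : X × Y) : EReal :=
  ⨅ (xs : X →L[ℝ] ℝ)
    (_ : ∃ ws : Y →L[ℝ] ℝ, (∃ ys ∈ Jdual (p.2 - ybar), ‖ws - ys‖ ≤ ρ) ∧ xs ∈ coderiv F p ws),
    (‖xs‖ : EReal)

/-- `ξ_q(y) = ‖y - ybar‖^{1-q}/q`. -/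
def xiq (qq : ℝ) (ybar y : Y) : ℝ := ‖y - ybar‖ ^ (1 - qq) / qq

/-- The strict subdifferential q-slope `\overline{|∂F|}_q(xbar,ybar)`. -/
def ssdFq (F : X → Set Y) (xbar : X) (ybar : Y) (qq : ℝ) : EReal :=
  (qq : EReal) *
    ⨆ (ρ : ℝ) (_ : 0 < ρ),
      ⨅ (p : X × Y)
        (_ : p ∈ gph F ∧ ‖p.1 - xbar‖ < ρ ∧ ‖p.2 - ybar‖ < ρ ∧ p.1 ∉ Finv F ybar),
        ((‖p.2 - ybar‖ ^ (qq - 1) : ℝ) : EReal) * FsdSlope F ybar (xiq qq ybar p.2 * ρ) p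

/-- The modified strict subdifferential q-slope `\overline{|∂F|}^{+}_q(xbar,ybar)`. -/
def msdFq (F : X → Set Y) (xbar : X) (ybar : Y) (qq : ℝ) : EReal :=
  ⨆ (ρ : ℝ) (_ : 0 < ρ),
    ⨅ (p : X × Y)
      (_ : p ∈ gph F ∧ ‖p.1 - xbar‖ < ρ ∧ ‖p.2 - ybar‖ < ρ ∧ p.1 ∉ Finv F ybar),
      max (((qq * ‖p.2 - ybar‖ ^ (qq - 1) : ℝ) : EReal) * FsdSlope F ybar (xiq qq ybar p.2 * ρ) p)
        (equot ((‖p.2 - ybar‖ ^ qq : ℝ) : EReal) ‖p.1 - xbar‖)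

/-- The normalized ε-enlargement `J^q_ε(y)` of the q-duality mapping
`J^q(y) = q‖y‖^{q-1} J(y)`. -/
def JqEps (qq ε : ℝ) (y : Y) : Set (Y →L[ℝ] ℝ) :=
  {ws | ∃ us ∈ Jdual y, ∃ vs : Y →L[ℝ] ℝ, ‖vs‖ ≤ 1 ∧
    (qq * ‖y‖ ^ (qq - 1)) • us + ε • vs ≠ 0 ∧
    ws = ‖(qq * ‖y‖ ^ (qq - 1)) • us + ε • vs‖⁻¹ • ((qq * ‖y‖ ^ (qq - 1)) • us + ε • vs)}

/-- The constant `β` of Li and Mordukhovich. -/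
def betaLM (F : X → Set Y) (xbar : X) (ybar : Y) (qq : ℝ) : EReal :=
  ⨆ (ε : ℝ) (_ : 0 < ε),
    ⨅ (p : X × Y) (xs : X →L[ℝ] ℝ)
      (_ : p ∈ gph F ∧ p.1 ∉ Finv F ybar ∧ ‖p.1 - xbar‖ < ε ∧
           ‖p.2 - ybar‖ < min ε (‖p.1 - xbar‖ ^ (1 / 2 : ℝ)) ∧
           ∃ ws ∈ JqEps qq ε (p.2 - ybar), xs ∈ coderiv F p ws),
      ((qq * ‖xs‖ * ‖p.2 - ybar‖ ^ (qq - 1) : ℝ) : EReal)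

end NormedDefs

end HolderPaper

namespace HolderPaper

section Aux
variable {X Y : Type*} [MetricSpace X] [MetricSpace Y]

lemma drho_nonneg (ρ : ℝ) (p q : X × Y) : 0 ≤ drho ρ p q :=
  le_trans dist_nonneg (le_max_left _ _)

lemma drho_comm (ρ : ℝ) (p q : X × Y) : drho ρ p q = drho ρ q p := by
  unfold drho; rw [dist_comm, dist_comm p.2]

lemma drho_self (ρ : ℝ) (p : X × Y) : drho ρ p p = 0 := by
  unfold drho; simp

lemma drho_pos {ρ : ℝ} (hρ : 0 < ρ) {p q : X × Y} (h : p ≠ q) : 0 < drho ρ p q := by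
  have h1 : p.1 ≠ q.1 ∨ p.2 ≠ q.2 := by
    rw [Ne, Prod.ext_iff] at h; tauto
  rcases h1 with h1 | h1
  · exact lt_of_lt_of_le (dist_pos.2 h1) (le_max_left _ _)
  · exact lt_of_lt_of_le (mul_pos hρ (dist_pos.2 h1)) (le_max_right _ _)

lemma drho_triangle {ρ : ℝ} (hρ : 0 ≤ ρ) (p q r : X × Y) :
    drho ρ p r ≤ drho ρ p q + drho ρ q r := by
  unfold drho
  apply max_le
  · exact (dist_triangle _ _ _).trans (add_le_add (le_max_left _ _) (le_max_left _ _))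
  · calc ρ * dist p.2 r.2 ≤ ρ * (dist p.2 q.2 + dist q.2 r.2) :=
        mul_le_mul_of_nonneg_left (dist_triangle _ _ _) hρ
      _ = ρ * dist p.2 q.2 + ρ * dist q.2 r.2 := mul_add _ _ _
      _ ≤ _ := add_le_add (le_max_right _ _) (le_max_right _ _)

lemma dist_fst_le_drho (ρ : ℝ) (p q : X × Y) : dist p.1 q.1 ≤ drho ρ p q := le_max_left _ _

lemma dist_snd_le_drho {ρ : ℝ} (hρ : 0 < ρ) (p q : X × Y) :
    dist p.2 q.2 ≤ drho ρ p q / ρ := by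
  rw [le_div_iff₀ hρ, mul_comm]
  exact le_max_right _ _

lemma dist_le_drho_div {ρ : ℝ} (hρ : 0 < ρ) (hρ1 : ρ ≤ 1) (p q : X × Y) :
    dist p q ≤ drho ρ p q / ρ := by
  rw [Prod.dist_eq]
  apply max_le
  · rw [le_div_iff₀ hρ]
    exact le_trans (mul_le_of_le_one_right dist_nonneg hρ1) (dist_fst_le_drho ρ p q)
  · exact dist_snd_le_drho hρ p q

lemma continuous_drho (ρ : ℝ) (p : X × Y) : Continuous (fun u : X × Y => drho ρ u p) :=
  (continuous_fst.dist continuous_const).max (continuous_const.mul (continuous_snd.dist continuous_const))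

lemma equot_zero_den (a : EReal) : equot a 0 = ⊤ := if_pos rfl

lemma equot_coe {r d : ℝ} (hd : 0 < d) : equot (r : EReal) d = ((r / d : ℝ) : EReal) := by
  rw [equot, if_neg hd.ne', ← EReal.coe_mul, div_eq_mul_inv]

lemma equot_top {d : ℝ} (hd : 0 < d) : equot ⊤ d = ⊤ := by
  rw [equot, if_neg hd.ne']
  exact EReal.top_mul_of_pos (EReal.coe_pos.2 (inv_pos.2 hd))

lemma le_equot {γ r d : ℝ} (hd : 0 < d) (h : γ * d ≤ r) : (γ : EReal) ≤ equot (r : EReal) d := by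
  rw [equot_coe hd]
  exact EReal.coe_le_coe_iff.2 ((le_div_iff₀ hd).2 h)

lemma equot_le {γ r d : ℝ} (hd : 0 < d) (h : r ≤ γ * d) : equot (r : EReal) d ≤ (γ : EReal) := by
  rw [equot_coe hd]
  exact EReal.coe_le_coe_iff.2 ((div_le_iff₀ hd).2 h)

lemma equot_nonneg {a : EReal} {d : ℝ} (ha : 0 ≤ a) (hd : 0 ≤ d) : 0 ≤ equot a d := by
  rw [equot]
  split
  · exact le_top
  · exact mul_nonneg ha (EReal.coe_nonneg.2 (inv_nonneg.2 hd))

lemma equot_anti {a : EReal} (ha : 0 ≤ a) {d1 d2 : ℝ} (h1 : 0 < d1) (h2 : d1 ≤ d2) :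
    equot a d2 ≤ equot a d1 := by
  have h2' : 0 < d2 := lt_of_lt_of_le h1 h2
  rw [equot, equot, if_neg h1.ne', if_neg h2'.ne']
  exact mul_le_mul_of_nonneg_left
    (EReal.coe_le_coe_iff.2 (inv_anti₀ h1 h2)) ha

lemma ereal_le_of_forall {a b : EReal} (h : ∀ c : ℝ, (c : EReal) < a → (c : EReal) ≤ b) :
    a ≤ b := by
  by_contra hc
  push_neg at hc
  obtain ⟨x, hx1, hx2⟩ := EReal.lt_iff_exists_real_btwn.1 hc
  exact absurd (h x hx2) (not_le.2 hx1)

lemma rpow_lt_of_rpow_lt {a b q : ℝ} (hb : 0 ≤ b) (hq : 0 < q) (h : a ^ q < b ^ q) : a < b := by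
  by_contra hab
  exact absurd (Real.rpow_le_rpow hb (not_lt.1 hab) hq.le) h.not_ge

end Aux

/-- Ekeland-type variational principle for the metric `drho`. -/
lemma evp {X Y : Type*} [MetricSpace X] [CompleteSpace X] [MetricSpace Y] [CompleteSpace Y]
    {M : Set (X × Y)} (hM : IsClosed M) {g : X × Y → ℝ} (hg : Continuous g)
    (hg0 : ∀ u ∈ M, 0 ≤ g u) {ρ : ℝ} (hρ : 0 < ρ) (hρ1 : ρ ≤ 1)
    {p0 : X × Y} (hp0 : p0 ∈ M) {κ lam : ℝ} (hκ : 0 < κ) (hlam : g p0 ≤ κ * lam) :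
    ∃ p' ∈ M, g p' ≤ g p0 ∧ drho ρ p0 p' ≤ lam ∧
      ∀ u ∈ M, u ≠ p' → g p' - κ * drho ρ u p' < g u := by
  set T : X × Y → Set (X × Y) := fun p => {u | u ∈ M ∧ g u + κ * drho ρ u p ≤ g p} with hT
  have hTsub : ∀ p, T p ⊆ M := fun p u hu => hu.1
  have hTself : ∀ p ∈ M, p ∈ T p := fun p hp => ⟨hp, by rw [drho_self]; simp⟩
  have hTtrans : ∀ p v, v ∈ T p → ∀ u, u ∈ T v → u ∈ T p := by
    rintro p v ⟨hvM, hv⟩ u ⟨huM, hu⟩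
    refine ⟨huM, ?_⟩
    have h3 := drho_triangle hρ.le u v p
    nlinarith [drho_nonneg ρ u v, drho_nonneg ρ v p]
  have hTclosed : ∀ p, IsClosed (T p) := by
    intro p
    have : T p = M ∩ {u | g u + κ * drho ρ u p ≤ g p} := rfl
    rw [this]
    exact hM.inter (isClosed_le (hg.add (continuous_const.mul (continuous_drho ρ p)))
      continuous_const)
  have hbdd : ∀ p, BddBelow (g '' T p) := by
    rintro p
    exact ⟨0, by rintro y ⟨u, hu, rfl⟩; exact hg0 u (hTsub p hu)⟩
  have step : ∀ (n : ℕ) (p : X × Y), p ∈ M →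
      ∃ u, u ∈ T p ∧ g u ≤ sInf (g '' T p) + (1 / 2 : ℝ) ^ n := by
    intro n p hp
    have hne : (g '' T p).Nonempty := ⟨g p, p, hTself p hp, rfl⟩
    have hlt : sInf (g '' T p) < sInf (g '' T p) + (1 / 2 : ℝ) ^ n :=
      lt_add_of_pos_right _ (by positivity)
    obtain ⟨z, hz, hzlt⟩ := exists_lt_of_csInf_lt hne hlt
    obtain ⟨u, hu, rfl⟩ := hz
    exact ⟨u, hu, hzlt.le⟩
  choose f hf1 hf2 using step
  obtain ⟨P, hP0, hPs⟩ : ∃ P : ℕ → {p : X × Y // p ∈ M}, (P 0).1 = p0 ∧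
      ∀ n, ((P (n + 1)).1 ∈ T (P n).1 ∧
        g (P (n + 1)).1 ≤ sInf (g '' T (P n).1) + (1 / 2 : ℝ) ^ n) :=
    by
      refine ⟨fun n => Nat.rec ⟨p0, hp0⟩
        (fun n ih => ⟨f n ih.1 ih.2, hTsub _ (hf1 n ih.1 ih.2)⟩) n, rfl, fun n => ?_⟩
      exact ⟨hf1 n _ _, hf2 n _ _⟩
  have hstep : ∀ n, (P (n + 1) : X × Y) ∈ T (P n) := fun n => (hPs n).1
  have hstep2 : ∀ n, g (P (n + 1)) ≤ sInf (g '' T (P n)) + (1 / 2 : ℝ) ^ n := fun n => (hPs n).2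
  have hchain : ∀ m n, n ≤ m → (P m : X × Y) ∈ T (P n) := by
    intro m n h
    induction m with
    | zero =>
      have : n = 0 := Nat.le_zero.1 h
      subst this; exact hTself _ (P 0).2
    | succ m ih =>
      rcases Nat.lt_or_ge n (m + 1) with h1 | h1
      · exact hTtrans _ _ (ih (Nat.lt_succ_iff.1 h1)) _ (hstep m)
      · have : n = m + 1 := le_antisymm h h1
        subst this; exact hTself _ (P (m+1)).2
  have hanti : ∀ n, g (P (n + 1)) ≤ g (P n) := by
    intro n
    have := (hstep n).2
    nlinarith [drho_nonneg ρ ((P (n+1) : X × Y)) ((P n : X × Y)), hκ.le,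
      mul_nonneg hκ.le (drho_nonneg ρ ((P (n+1) : X × Y)) ((P n : X × Y)))]
  have hAnti : Antitone fun n => g (P n) := antitone_nat_of_succ_le hanti
  have hPos : ∀ n, 0 ≤ g (P n) := fun n => hg0 _ (P n).2
  have hbddr : BddBelow (range fun n => g (P n)) := ⟨0, by rintro z ⟨n, rfl⟩; exact hPos n⟩
  set L := ⨅ n, g (P n) with hL
  have hLle : ∀ n, L ≤ g (P n) := fun n => ciInf_le hbddr n
  have hLtend : Tendsto (fun n => g (P n)) atTop (𝓝 L) := tendsto_atTop_ciInf hAnti hbddr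
  have hdist_bound : ∀ m n, n ≤ m → κ * drho ρ (P m : X × Y) (P n : X × Y) ≤ g (P n) - g (P m) := by
    intro m n h
    have := (hchain m n h).2
    linarith
  have hCauchy : CauchySeq (fun n => (P n : X × Y)) := by
    rw [Metric.cauchySeq_iff']
    intro ε hε
    have hx : L < L + κ * ρ * (ε / 2) := lt_add_of_pos_right _ (by positivity)
    obtain ⟨N, hN⟩ := (hLtend.eventually (gt_mem_nhds hx)).exists
    refine ⟨N, fun n hn => ?_⟩
    have h1 : κ * drho ρ (P n : X × Y) (P N : X × Y) ≤ g (P N) - g (P n) := hdist_bound n N hn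
    have h2 : g (P N) - g (P n) ≤ g (P N) - L := by linarith [hLle n]
    have h3 : g (P N) - L < κ * ρ * (ε / 2) := by linarith
    have h4 : drho ρ (P n : X × Y) (P N : X × Y) < ρ * (ε / 2) := by
      nlinarith
    have h5 := dist_le_drho_div hρ hρ1 (P n : X × Y) (P N : X × Y)
    have h6 : drho ρ ((P n : X × Y)) ((P N : X × Y)) / ρ < ε / 2 := by
      rw [div_lt_iff₀ hρ]; nlinarith
    linarith
  obtain ⟨p', htend⟩ := cauchySeq_tendsto_of_complete hCauchy
  have hp'M : p' ∈ M := hM.mem_of_tendsto htend (Eventually.of_forall fun n => (P n).2)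
  have hPT : ∀ n, p' ∈ T (P n) := by
    intro n
    apply (hTclosed (P n)).mem_of_tendsto htend
    filter_upwards [eventually_ge_atTop n] with m hm
    exact hchain m n hm
  have hgtend : Tendsto (fun n => g (P n)) atTop (𝓝 (g p')) :=
    (hg.continuousAt.tendsto).comp htend
  have hgL : g p' = L := tendsto_nhds_unique hgtend hLtend
  refine ⟨p', hp'M, ?_, ?_, ?_⟩
  · have := (hPT 0).2
    rw [hP0] at this
    nlinarith [mul_nonneg hκ.le (drho_nonneg ρ p' p0)]
  · have h1 := (hPT 0).2
    rw [hP0] at h1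
    have h2 : 0 ≤ g p' := hg0 p' hp'M
    rw [drho_comm]
    nlinarith
  · intro u huM hune
    by_contra hcon
    push_neg at hcon
    have hu : g u + κ * drho ρ u p' ≤ g p' := by linarith
    have huT : ∀ n, u ∈ T (P n) := by
      intro n
      refine ⟨huM, ?_⟩
      have h1 := (hPT n).2
      have h2 := drho_triangle hρ.le u p' (P n : X × Y)
      nlinarith
    have hinf : ∀ n, g u ≥ g (P (n + 1)) - (1 / 2 : ℝ) ^ n := by
      intro n
      have h1 : sInf (g '' T (P n)) ≤ g u := csInf_le (hbdd _) (mem_image_of_mem g (huT n))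
      linarith [hstep2 n]
    have htend2 : Tendsto (fun n => g (P (n + 1)) - (1 / 2 : ℝ) ^ n) atTop (𝓝 (L - 0)) := by
      apply Tendsto.sub
      · exact hLtend.comp (tendsto_add_atTop_nat 1)
      · exact tendsto_pow_atTop_nhds_zero_of_lt_one (by norm_num) (by norm_num)
    have hgeL : L ≤ g u := by
      rw [show L = L - 0 by ring]
      exact le_of_tendsto htend2 (Eventually.of_forall fun n => hinf n)
    have : drho ρ u p' ≤ 0 := by
      rw [← hgL] at hgeL
      nlinarith
    exact hune (by
      have h0 : drho ρ u p' = 0 := le_antisymm this (drho_nonneg ρ u p')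
      have hd : dist u p' ≤ 0 := by
        have := dist_le_drho_div hρ hρ1 u p'
        rw [h0] at this
        simpa using this
      exact dist_le_zero.1 hd)


set_option maxHeartbeats 2000000 in
/-- if `X`, `Y` are complete and `gph F` is locally closed near `(xbar,ybar)`,
then `sr_q[F](xbar,ybar) = \overline{|∇F|}^◇_q(xbar,ybar)`. -/
theorem statement17 {X Y : Type*} [MetricSpace X] [CompleteSpace X] [MetricSpace Y] [CompleteSpace Y]
    (F : X → Set Y) (xbar : X) (ybar : Y) (hbar : (xbar, ybar) ∈ gph F)
    (qq : ℝ) (hq0 : 0 < qq) (hq1 : qq ≤ 1)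
    (hcl : ∃ U ∈ 𝓝 (xbar, ybar), IsClosed U ∧ IsClosed (gph F ∩ U)) :
    srq F xbar ybar qq = ussFq F xbar ybar qq := by
  obtain ⟨U, hU, hUcl, hGU⟩ := hcl
  have hSbar : xbar ∈ Finv F ybar := hbar
  -- basic positivity facts
  have hgph_ne : ∀ p : X × Y, p ∈ gph F → p.1 ∉ Finv F ybar → p.2 ≠ ybar := by
    intro p hp hp1 h
    exact hp1 (by rw [Finv, mem_setOf_eq, ← h]; exact hp)
  have hsr0 : (0 : EReal) ≤ srq F xbar ybar qq := by
    rw [srq, Filter.liminf_eq]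
    apply le_sSup
    rw [mem_setOf_eq]
    apply Eventually.of_forall
    intro x
    apply equot_nonneg _ infDist_nonneg
    split
    · exact le_top
    · exact EReal.coe_nonneg.2 (Real.rpow_nonneg infDist_nonneg _)
  have hslope_nonneg : ∀ (ρ : ℝ) (p : X × Y), p ∈ gph F → p.1 ∉ Finv F ybar →
      (0 : EReal) ≤ FnslopeQ F ybar qq ρ p := by
    intro ρ p hp hp1
    have hne : ((xbar, ybar) : X × Y) ≠ p := by
      intro h; rw [← h] at hp1; exact hp1 hSbar
    rw [FnslopeQ]
    exact le_iSup₂_of_le (xbar, ybar) ⟨hbar, hne⟩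
      (equot_nonneg (EReal.coe_nonneg.2 (le_max_right _ _)) (drho_nonneg _ _ _))
  have huss0 : (0 : EReal) ≤ ussFq F xbar ybar qq := by
    rw [ussFq]
    exact le_iSup₂_of_le 1 one_pos (le_iInf₂ fun p hp => hslope_nonneg 1 p hp.1 hp.2.2.2)
  have hmono : ∀ {ρ' ρ0 : ℝ}, 0 < ρ' → ρ' ≤ ρ0 → ∀ p : X × Y,
      FnslopeQ F ybar qq ρ0 p ≤ FnslopeQ F ybar qq ρ' p := by
    intro ρ' ρ0 h0 h p
    rw [FnslopeQ, FnslopeQ]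
    refine iSup₂_le fun u hu => le_iSup₂_of_le u hu ?_
    refine equot_anti (EReal.coe_nonneg.2 (le_max_right _ _)) (drho_pos h0 hu.2) ?_
    exact max_le_max le_rfl (mul_le_mul_of_nonneg_right h dist_nonneg)
  -- hard direction : ussFq ≤ srq
  have hdir1 : ussFq F xbar ybar qq ≤ srq F xbar ybar qq := by
    apply ereal_le_of_forall
    intro γ hγlt
    rcases le_or_gt γ 0 with hγ0 | hγ0
    · exact le_trans (show (γ : EReal) ≤ (0 : EReal) by exact_mod_cast hγ0) hsr0
    rw [ussFq, lt_iSup_iff] at hγlt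
    obtain ⟨ρ0, hγlt⟩ := hγlt
    rw [lt_iSup_iff] at hγlt
    obtain ⟨hρ0, hinf⟩ := hγlt
    obtain ⟨r, hr0, hball⟩ := Metric.nhds_basis_closedBall.mem_iff.1 hU
    set ρ := min ρ0 (min 1 (r / 4)) with hρdef
    have hρpos : 0 < ρ := lt_min hρ0 (lt_min one_pos (by positivity))
    have hρ1 : ρ ≤ 1 := le_trans (min_le_right _ _) (min_le_left _ _)
    have hρr : ρ ≤ r / 4 := le_trans (min_le_right _ _) (min_le_right _ _)
    have hρρ0 : ρ ≤ ρ0 := min_le_left _ _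
    set δ := min (ρ / 4) (min (ρ ^ 2 / 4) ((ρ / 2) ^ qq / γ)) with hδdef
    have hrpow_pos : 0 < (ρ / 2) ^ qq := Real.rpow_pos_of_pos (by positivity) _
    have hδpos : 0 < δ := lt_min (by positivity) (lt_min (by positivity) (by positivity))
    have hδρ4 : δ ≤ ρ / 4 := min_le_left _ _
    have hδρ2 : δ ≤ ρ ^ 2 / 4 := le_trans (min_le_right _ _) (min_le_left _ _)
    have hδq : δ ≤ (ρ / 2) ^ qq / γ := le_trans (min_le_right _ _) (min_le_right _ _)
    have key : ∀ x : X, dist x xbar < δ → x ∉ Finv F ybar → (γ : EReal) ≤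
        equot (if F x = ∅ then ⊤ else ((infDist ybar (F x) ^ qq : ℝ) : EReal))
          (infDist x (Finv F ybar)) := by
      intro x hxδ hxS
      by_cases hs0 : infDist x (Finv F ybar) = 0
      · rw [hs0, equot_zero_den]; exact le_top
      have hspos : 0 < infDist x (Finv F ybar) :=
        lt_of_le_of_ne infDist_nonneg (Ne.symm hs0)
      set s := infDist x (Finv F ybar) with hsdef
      by_cases hFx : F x = ∅
      · rw [if_pos hFx, equot_top hspos]; exact le_top
      rw [if_neg hFx]
      by_contra hcon
      push_neg at hcon
      rw [equot_coe hspos] at hcon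
      have hnum : infDist ybar (F x) ^ qq < γ * s := by
        have h1 := EReal.coe_lt_coe_iff.1 hcon
        rw [div_lt_iff₀ hspos] at h1
        linarith
      have hsδ : s < δ := lt_of_le_of_lt (infDist_le_dist_of_mem hSbar) hxδ
      have hIlt : infDist ybar (F x) < (γ * s) ^ qq⁻¹ := by
        have h1 : (infDist ybar (F x) ^ qq) ^ qq⁻¹ < (γ * s) ^ qq⁻¹ :=
          Real.rpow_lt_rpow (Real.rpow_nonneg infDist_nonneg _) hnum (inv_pos.2 hq0)
        rwa [Real.rpow_rpow_inv infDist_nonneg hq0.ne'] at h1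
      obtain ⟨y, hyF, hyd⟩ := (Metric.infDist_lt_iff (Set.nonempty_iff_ne_empty.2 hFx)).1 hIlt
      have hydq : dist y ybar ^ qq < γ * s := by
        have h1 : dist ybar y ^ qq < ((γ * s) ^ qq⁻¹) ^ qq :=
          Real.rpow_lt_rpow dist_nonneg hyd hq0
        rw [Real.rpow_inv_rpow (by positivity) hq0.ne'] at h1
        rwa [dist_comm]
      have hyybar : y ≠ ybar := by
        intro h; rw [h] at hyF; exact hxS hyF
      have hgp0pos : 0 < dist y ybar ^ qq :=
        Real.rpow_pos_of_pos (dist_pos.2 hyybar) qq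
      have hdyy : dist y ybar < ρ / 2 := by
        apply rpow_lt_of_rpow_lt (by positivity) hq0
        have h7 : γ * s < γ * δ := by nlinarith
        have h8 : γ * δ ≤ (ρ / 2) ^ qq := by
          rw [mul_comm]; exact (le_div_iff₀ hγ0).1 hδq
        linarith
      have hp0U : ((x, y) : X × Y) ∈ U := by
        apply hball
        rw [mem_closedBall, Prod.dist_eq]
        apply max_le
        · simp only [Prod.fst]
          have : dist x xbar < δ := hxδ
          linarith
        · simp only [Prod.snd]
          linarith
      have hp0M : ((x, y) : X × Y) ∈ gph F ∩ U := ⟨hyF, hp0U⟩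
      set lam := dist y ybar ^ qq / γ with hlamdef
      have hlampos : 0 < lam := div_pos hgp0pos hγ0
      have hlams : lam < s := by
        rw [hlamdef, div_lt_iff₀ hγ0]
        nlinarith
      have hgcont : Continuous (fun u : X × Y => dist u.2 ybar ^ qq) :=
        (continuous_snd.dist continuous_const).rpow_const (fun _ => Or.inr hq0.le)
      obtain ⟨p', hp'M, hgle, hdle, hmin⟩ :=
        evp hGU hgcont (fun u _ => Real.rpow_nonneg dist_nonneg _) hρpos hρ1 hp0M hγ0
          (show dist ((x, y) : X × Y).2 ybar ^ qq ≤ γ * lam from le_of_eq (by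
            simp only [hlamdef]; field_simp))
      have hd1 : dist x p'.1 ≤ lam := le_trans (dist_fst_le_drho ρ (x, y) p') hdle
      have hd2 : dist y p'.2 ≤ lam / ρ :=
        le_trans (dist_snd_le_drho hρpos (x, y) p') (by gcongr)
      have hp'G : p' ∈ gph F := hp'M.1
      have hp'S : p'.1 ∉ Finv F ybar := by
        intro hmem
        have h1 : s ≤ dist x p'.1 := infDist_le_dist_of_mem hmem
        linarith
      have hwin1 : dist p'.1 xbar < ρ := by
        have h1 := dist_triangle p'.1 x xbar
        have h2 : dist p'.1 x = dist x p'.1 := dist_comm _ _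
        linarith
      have hwin2 : dist p'.2 ybar < ρ := by
        have h1 := dist_triangle p'.2 y ybar
        have h2 : dist p'.2 y = dist y p'.2 := dist_comm _ _
        have h3 : lam / ρ ≤ δ / ρ := by gcongr; linarith
        have h4 : δ / ρ ≤ ρ / 4 := by
          rw [div_le_iff₀ hρpos]; nlinarith
        linarith
      have hub : FnslopeQ F ybar qq ρ p' ≤ (γ : EReal) := by
        rw [FnslopeQ]
        refine iSup₂_le fun u hu => ?_
        obtain ⟨huG, hune⟩ := hu
        have hD : 0 < drho ρ u p' := drho_pos hρpos hune
        apply equot_le hD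
        apply max_le _ (by positivity)
        have hq_u : 0 ≤ dist u.2 ybar ^ qq := Real.rpow_nonneg dist_nonneg _
        by_cases huU : u ∈ U
        · have h5 := hmin u ⟨huG, huU⟩ hune
          linarith
        · have hgub : dist p'.2 ybar ^ qq ≤ dist y ybar ^ qq := hgle
          have hnotin : r < dist u (xbar, ybar) := by
            by_contra h
            push_neg at h
            exact huU (hball (mem_closedBall.2 h))
          rw [Prod.dist_eq] at hnotin
          have hδD : δ ≤ drho ρ u p' := by
            rcases lt_max_iff.1 hnotin with h | h
            · have h6 := dist_triangle u.1 p'.1 xbar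
              have h7 : δ ≤ dist u.1 p'.1 := by linarith
              exact le_trans h7 (dist_fst_le_drho ρ u p')
            · have h6 := dist_triangle u.2 p'.2 ybar
              have h8 : r - ρ ≤ dist u.2 p'.2 := by linarith
              have h9 : ρ * (r - ρ) ≤ ρ * dist u.2 p'.2 :=
                mul_le_mul_of_nonneg_left h8 hρpos.le
              have h10 : δ ≤ ρ * (r - ρ) := by nlinarith
              exact le_trans (le_trans h10 h9) (le_max_right _ _)
          have h11 : γ * δ ≤ γ * drho ρ u p' := mul_le_mul_of_nonneg_left hδD hγ0.le
          nlinarith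
      have hlb : (γ : EReal) < FnslopeQ F ybar qq ρ p' := by
        refine lt_of_lt_of_le hinf (le_trans ?_ (hmono hρpos hρρ0 p'))
        exact iInf₂_le p' ⟨hp'G, lt_of_lt_of_le hwin1 hρρ0, lt_of_lt_of_le hwin2 hρρ0, hp'S⟩
      exact absurd hub (not_le.2 hlb)
    rw [srq, Filter.liminf_eq]
    apply le_sSup
    rw [mem_setOf_eq, eventually_nhdsWithin_iff, Metric.eventually_nhds_iff]
    exact ⟨δ, hδpos, fun x hx hxS => key x hx hxS⟩
  -- easy direction : srq ≤ ussFq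
  have hdir2 : srq F xbar ybar qq ≤ ussFq F xbar ybar qq := by
    apply ereal_le_of_forall
    intro c hclt
    rcases le_or_gt c 0 with hc0 | hc0
    · exact le_trans (show (c : EReal) ≤ (0 : EReal) by exact_mod_cast hc0) huss0
    obtain ⟨γ, hγ1, hγ2⟩ := EReal.lt_iff_exists_real_btwn.1 hclt
    have hcγ : c < γ := EReal.coe_lt_coe_iff.1 hγ1
    have hγpos : 0 < γ := lt_trans hc0 hcγ
    rw [srq] at hγ2
    have hev := Filter.eventually_lt_of_lt_liminf hγ2
    rw [eventually_nhdsWithin_iff, Metric.eventually_nhds_iff] at hev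
    obtain ⟨δ, hδpos, hδ⟩ := hev
    set ρ := min δ (min 1 (1 / c)) with hρdef
    have hρpos : 0 < ρ := lt_min hδpos (lt_min one_pos (by positivity))
    have hρδ : ρ ≤ δ := min_le_left _ _
    have hρ1 : ρ ≤ 1 := le_trans (min_le_right _ _) (min_le_left _ _)
    have hρc : c * ρ ≤ 1 := by
      have h1 : ρ ≤ 1 / c := le_trans (min_le_right _ _) (min_le_right _ _)
      rw [le_div_iff₀ hc0] at h1
      linarith
    rw [ussFq]
    refine le_iSup₂_of_le ρ hρpos (le_iInf₂ fun p hp => ?_)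
    obtain ⟨hpG, hpx, hpy, hpS⟩ := hp
    have hyne : p.2 ≠ ybar := hgph_ne p hpG hpS
    have hd : 0 < dist p.2 ybar := dist_pos.2 hyne
    have hbound := hδ (lt_of_lt_of_le hpx hρδ) hpS
    have hFne : F p.1 ≠ ∅ := by
      intro h
      have : p.2 ∈ F p.1 := hpG
      rw [h] at this
      exact this
    rw [if_neg hFne] at hbound
    have hd1 : dist p.2 ybar < 1 := lt_of_lt_of_le hpy hρ1
    have hApre : (1 : ℝ) ≤ dist p.2 ybar ^ (qq - 1) := by
      have h1 := Real.rpow_le_rpow_of_exponent_ge hd hd1.le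
        (show qq - 1 ≤ 0 by linarith)
      rwa [Real.rpow_zero] at h1
    have hA : dist p.2 ybar ≤ dist p.2 ybar ^ qq := by
      have h2 : dist p.2 ybar ^ qq = dist p.2 ybar ^ (qq - 1) * dist p.2 ybar := by
        calc dist p.2 ybar ^ qq = dist p.2 ybar ^ (qq - 1 + 1) := by ring_nf
          _ = dist p.2 ybar ^ (qq - 1) * dist p.2 ybar ^ (1 : ℝ) := Real.rpow_add hd _ _
          _ = dist p.2 ybar ^ (qq - 1) * dist p.2 ybar := by rw [Real.rpow_one]
      nlinarith
    have hB : c * (ρ * dist p.2 ybar) ≤ dist p.2 ybar ^ qq := by nlinarith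
    have hSne : (Finv F ybar).Nonempty := ⟨xbar, hSbar⟩
    obtain ⟨x', hx'S, hkey⟩ : ∃ x', x' ∈ Finv F ybar ∧
        c * dist p.1 x' ≤ dist p.2 ybar ^ qq := by
      by_cases hs0 : infDist p.1 (Finv F ybar) = 0
      · have h1 : infDist p.1 (Finv F ybar) < ρ * dist p.2 ybar := by
          rw [hs0]; positivity
        obtain ⟨x', hx'S, hx'lt⟩ := (Metric.infDist_lt_iff hSne).1 h1
        exact ⟨x', hx'S, by nlinarith⟩
      · have hspos : 0 < infDist p.1 (Finv F ybar) :=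
          lt_of_le_of_ne infDist_nonneg (Ne.symm hs0)
        have hγs : γ * infDist p.1 (Finv F ybar) < dist p.2 ybar ^ qq := by
          rw [equot_coe hspos] at hbound
          have h1 := EReal.coe_lt_coe_iff.1 hbound
          rw [lt_div_iff₀ hspos] at h1
          have h2 : infDist ybar (F p.1) ^ qq ≤ dist p.2 ybar ^ qq := by
            apply Real.rpow_le_rpow infDist_nonneg _ hq0.le
            rw [dist_comm]
            exact infDist_le_dist_of_mem hpG
          linarith
        have h3 : infDist p.1 (Finv F ybar) < (γ / c) * infDist p.1 (Finv F ybar) := by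
          have h4 : (1 : ℝ) < γ / c := (one_lt_div hc0).2 hcγ
          nlinarith
        obtain ⟨x', hx'S, hx'lt⟩ := (Metric.infDist_lt_iff hSne).1 h3
        refine ⟨x', hx'S, ?_⟩
        have h5 : c * dist p.1 x' ≤ c * ((γ / c) * infDist p.1 (Finv F ybar)) :=
          mul_le_mul_of_nonneg_left hx'lt.le hc0.le
        have h6 : c * ((γ / c) * infDist p.1 (Finv F ybar)) =
            γ * infDist p.1 (Finv F ybar) := by
          field_simp
        linarith
    have hune : ((x', ybar) : X × Y) ≠ p := by
      intro h
      exact hyne (congrArg Prod.snd h).symm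
    rw [FnslopeQ]
    refine le_iSup₂_of_le (x', ybar) ⟨hx'S, hune⟩ ?_
    have hnum : max (dist p.2 ybar ^ qq - dist ((x', ybar) : X × Y).2 ybar ^ qq) 0 =
        dist p.2 ybar ^ qq := by
      simp only [Prod.snd]
      rw [dist_self, Real.zero_rpow hq0.ne', sub_zero]
      exact max_eq_left (Real.rpow_nonneg dist_nonneg _)
    rw [hnum]
    apply le_equot (drho_pos hρpos hune)
    rw [drho]
    simp only [Prod.fst, Prod.snd]
    rcases le_total (dist x' p.1) (ρ * dist ybar p.2) with h | h
    · rw [max_eq_right h, dist_comm ybar p.2]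
      exact hB
    · rw [max_eq_left h, dist_comm x' p.1]
      exact hkey
  exact le_antisymm hdir2 hdir1


end HolderPaper
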